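/- Let (G,X*) be a contracting self-similar action with limit space J_G/G = J, shift map s induced by the one-sided shift on X^{-ω}, and self-similar measure m (push-forward of the uniform Bernoulli measure under π : X^{-ω} → J). Then m-almost every point of J has exactly |X| preimages under s. -/

import Mathlib

open MeasureTheory ENNReal

/-- A self-similar action of the group `G` over the alphabet `X`, given by the action
`g(xw) = (toFun g x) ((res g x) w)` on words: `toFun g` is the action on the first letter and
`res g x = g|_x` is the restriction. -/
structure SSA (G X : Type*) [Group G] where
  toFun : G → X → X
  res : G → X → G
  toFun_one : ∀ x, toFun 1 x = x
  res_one : ∀ x, res 1 x = 1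
  toFun_mul : ∀ g h x, toFun (g * h) x = toFun g (toFun h x)
  res_mul : ∀ g h x, res (g * h) x = res g (toFun h x) * res h x

namespace SSA

variable {G X : Type*} [Group G]

/-- Restriction of `g` along a finite word (head of the list = first letter read):
`g|_{x₁x₂…xₙ} = g|_{x₁}|_{x₂}…|_{xₙ}`. -/
def resW (S : SSA G X) : G → List X → G
  | g, [] => g
  | g, x :: v => S.resW (S.res g x) v

/-- Action of `g` on a finite word (head of the list = first letter read):
`g(xw) = g(x) (g|_x)(w)`. -/
def actW (S : SSA G X) : G → List X → List X
  | _, [] => []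
  | g, x :: v => S.toFun g x :: S.actW (S.res g x) v

/-- `N` is the nucleus of the (contracting) action: it is closed under restrictions, every
element restricts into `N` on all sufficiently long words, and it is the smallest such set. -/
def IsNucleus (S : SSA G X) (N : Finset G) : Prop :=
  (∀ g ∈ N, ∀ x : X, S.res g x ∈ N) ∧
  (∀ g : G, ∃ k : ℕ, ∀ v : List X, k ≤ v.length → S.resW g v ∈ N) ∧
  ∀ N' : Finset G, (∀ g : G, ∃ k : ℕ, ∀ v : List X, k ≤ v.length → S.resW g v ∈ N') → N ⊆ N'

/-- There is a left-infinite path in the Moore diagram of the nucleus `N` which ends at the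
vertex `h` and whose `i`-th edge is labeled `(w i, w' i)` (sequences are left-infinite,
index `0` being the rightmost letter): the vertices `q i ∈ N` satisfy
`q (i+1)|_{w i} = q i` and `q (i+1) (w i) = w' i`, with `q 0 = h`. -/
def MoorePath (S : SSA G X) (N : Finset G) (w w' : ℕ → X) (h : G) : Prop :=
  ∃ q : ℕ → G, q 0 = h ∧ (∀ i, q i ∈ N) ∧
    ∀ i : ℕ, S.res (q (i + 1)) (w i) = q i ∧ S.toFun (q (i + 1)) (w i) = w' i

/-- The asymptotic equivalence relation on `X^{-ω} × G`: `w·g ~ w'·g'` iff there is a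
left-infinite path in the Moore diagram of the nucleus labeled `(w, w')` ending at `g'g⁻¹`. -/
def AsympEquiv (S : SSA G X) (N : Finset G) (p q : (ℕ → X) × G) : Prop :=
  S.MoorePath N p.1 q.1 (q.2 * p.2⁻¹)

/-- The limit `G`-space: the quotient of `X^{-ω} × G` by the asymptotic equivalence relation. -/
def LimitGSpace (S : SSA G X) (N : Finset G) : Type _ :=
  Quot (S.AsympEquiv N)

/-- The tile `𝒯_v ⊂ J_G` for a finite word `v` (encoded as a list whose head is the rightmost
letter): the image in the limit `G`-space of `X^{-ω}v × {1}`.  For `v = []` this is the tile `𝒯`,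
the image of `X^{-ω} × {1}`. -/
def Tile (S : SSA G X) (N : Finset G) (v : List X) : Set (S.LimitGSpace N) :=
  Quot.mk (S.AsympEquiv N) ''
    {p : (ℕ → X) × G | p.2 = 1 ∧ ∀ (i : ℕ) (h : i < v.length), p.1 i = v.get ⟨i, h⟩}

/-- The translated tile `𝒯·g`: the image in the limit `G`-space of `X^{-ω} × {g}`. -/
def TileT (S : SSA G X) (N : Finset G) (g : G) : Set (S.LimitGSpace N) :=
  Quot.mk (S.AsympEquiv N) '' {p : (ℕ → X) × G | p.2 = g}

variable [MeasurableSpace X] [MeasurableSpace G]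

instance (S : SSA G X) (N : Finset G) : MeasurableSpace (S.LimitGSpace N) :=
  inferInstanceAs (MeasurableSpace (Quot (S.AsympEquiv N)))

/-- The measure `μ` on the limit `G`-space: the push-forward under the quotient map of the
product of the (uniform Bernoulli) measure `μ0` on `X^{-ω}` and the counting measure on `G`. -/
noncomputable def limitMeasure (S : SSA G X) (N : Finset G) (μ0 : Measure (ℕ → X)) :
    Measure (S.LimitGSpace N) :=
  Measure.map (Quot.mk (S.AsympEquiv N)) (μ0.prod Measure.count)

end SSA

/-- The cylinder subset of `X^{-ω}` of sequences whose last `u.length` letters spell `u`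
(head of `u` = rightmost letter). -/
def Cyl {X : Type*} (u : List X) : Set (ℕ → X) :=
  {w | ∀ (i : ℕ) (h : i < u.length), w i = u.get ⟨i, h⟩}

/-- The equivalence on `X^{-ω}` defining the limit space: `w ~ w'` iff there is a left-infinite
path in the Moore diagram of the nucleus labeled `(w, w')`. -/
def LimEquiv {G X : Type*} [Group G] (S : SSA G X) (N : Finset G) (w w' : ℕ → X) : Prop :=
  ∃ h : G, S.MoorePath N w w' h


/-!
The preimages of `[w]` under `s` are the classes `[w x]`, `x ∈ X`, and two of them coincide only
if some path labeled `(w, w)` in the nucleus avoids `1`. The set `E` of such `w` is saturated for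
`~` (conjugate by the path realizing `w ~ w'` and contract back into the nucleus) and measurable
(the values of `μ0` on cylinders force the singletons of `X` to be measurable). It is null: by
faithfulness every nontrivial element of the nucleus moves a word of one common length `L`, so
from any state at most `(|X|^L - 1)^k` of the `|X|^(kL)` words of length `kL` are fixed with
nontrivial restriction, whence `μ0 E ≤ |N| ((|X|^L - 1) / |X|^L)^k → 0`.
-/

open Pointwise

namespace SSA

variable {G X : Type*} [Group G] (S : SSA G X)

theorem toFun_inv_toFun (g : G) (x : X) : S.toFun g⁻¹ (S.toFun g x) = x := by
  rw [← S.toFun_mul, inv_mul_cancel, S.toFun_one]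

theorem res_inv_toFun (g : G) (x : X) : S.res g⁻¹ (S.toFun g x) = (S.res g x)⁻¹ :=
  eq_inv_of_mul_eq_one_left <| by rw [← S.res_mul, inv_mul_cancel, S.res_one]

@[simp] theorem resW_nil (g : G) : S.resW g [] = g := rfl

@[simp] theorem resW_cons (g : G) (x : X) (v : List X) :
    S.resW g (x :: v) = S.resW (S.res g x) v := rfl

@[simp] theorem actW_nil (g : G) : S.actW g [] = [] := rfl

@[simp] theorem actW_cons (g : G) (x : X) (v : List X) :
    S.actW g (x :: v) = S.toFun g x :: S.actW (S.res g x) v := rfl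

@[simp] theorem length_actW (g : G) (v : List X) : (S.actW g v).length = v.length := by
  induction v generalizing g <;> simp [*]

@[simp] theorem resW_one (v : List X) : S.resW 1 v = 1 := by
  induction v <;> simp [S.res_one, *]

@[simp] theorem actW_one (v : List X) : S.actW 1 v = v := by
  induction v <;> simp [S.res_one, S.toFun_one, *]

theorem resW_append (g : G) (u v : List X) : S.resW g (u ++ v) = S.resW (S.resW g u) v := by
  induction u generalizing g <;> simp [*]

theorem actW_append (g : G) (u v : List X) :
    S.actW g (u ++ v) = S.actW g u ++ S.actW (S.resW g u) v := by
  induction u generalizing g <;> simp [*]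

theorem actW_mul (g h : G) (v : List X) : S.actW (g * h) v = S.actW g (S.actW h v) := by
  induction v generalizing g h <;> simp [S.toFun_mul, S.res_mul, *]

theorem resW_mul (g h : G) (v : List X) :
    S.resW (g * h) v = S.resW g (S.actW h v) * S.resW h v := by
  induction v generalizing g h <;> simp [S.res_mul, *]

theorem actW_inv_actW (g : G) (v : List X) : S.actW g⁻¹ (S.actW g v) = v := by
  rw [← actW_mul, inv_mul_cancel, actW_one]

theorem resW_inv_actW (g : G) (v : List X) : S.resW g⁻¹ (S.actW g v) = (S.resW g v)⁻¹ :=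
  eq_inv_of_mul_eq_one_left <| by rw [← resW_mul, inv_mul_cancel, resW_one]

theorem actW_append_ne {g : G} {u : List X} (hu : S.actW g u ≠ u) (v : List X) :
    S.actW g (u ++ v) ≠ u ++ v := fun h =>
  hu (List.append_inj (by rwa [actW_append] at h) (S.length_actW g u)).1

end SSA

/-- `suffixWord w m = [w (m - 1), …, w 0]`: the last `m` letters of the left-infinite word `w`,
in the order in which the action reads them. -/
def suffixWord {α : Type*} (w : ℕ → α) : ℕ → List α
  | 0 => []
  | m + 1 => w m :: suffixWord w m

section SuffixWord

variable {α : Type*}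

@[simp] theorem length_suffixWord (w : ℕ → α) (m : ℕ) : (suffixWord w m).length = m := by
  induction m <;> simp [suffixWord, *]

theorem suffixWord_add (w : ℕ → α) (m k : ℕ) :
    suffixWord w (m + k) = suffixWord (fun j => w (m + j)) k ++ suffixWord w m := by
  induction k with
  | zero => rfl
  | succ k ih => rw [← Nat.add_assoc, suffixWord, ih]; rfl

theorem reverse_suffixWord (w : ℕ → α) (m : ℕ) :
    (suffixWord w m).reverse = List.ofFn fun i : Fin m => w i := by
  induction m with
  | zero => rfl
  | succ m ih => rw [suffixWord, List.reverse_cons, ih, List.ofFn_succ', List.concat_eq_append]; rfl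

theorem setOf_suffixWord_eq (v : List α) : {w | suffixWord w v.length = v} = Cyl v.reverse := by
  ext w
  change _ = _ ↔ _
  rw [← List.reverse_inj, reverse_suffixWord, List.ext_getElem_iff]
  simp [Cyl]

theorem measurableSet_setOf_suffixWord [MeasurableSpace α] [MeasurableSingletonClass α] [Finite α]
    (P : List α → Prop) (m : ℕ) : MeasurableSet {w : ℕ → α | P (suffixWord w m)} := by
  have hrestrict : Measurable fun (w : ℕ → α) (i : Fin m) => w i :=
    measurable_pi_lambda _ fun i => measurable_pi_apply _
  have := hrestrict (Set.toFinite {f : Fin m → α | P (List.ofFn f).reverse}).measurableSet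
  simpa [Set.preimage, ← reverse_suffixWord] using this

end SuffixWord

namespace SSA

variable {G X : Type*} [Group G] (S : SSA G X)

theorem resW_suffixWord {w : ℕ → X} {q : ℕ → G} (hq : ∀ i, S.res (q (i + 1)) (w i) = q i)
    (m : ℕ) : S.resW (q m) (suffixWord w m) = q 0 := by
  induction m with
  | zero => rfl
  | succ m ih => rw [suffixWord, resW_cons, hq, ih]

theorem actW_suffixWord {w w' : ℕ → X} {q : ℕ → G}
    (hq : ∀ i, S.res (q (i + 1)) (w i) = q i ∧ S.toFun (q (i + 1)) (w i) = w' i) (m : ℕ) :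
    S.actW (q m) (suffixWord w m) = suffixWord w' m := by
  induction m with
  | zero => rfl
  | succ m ih => rw [suffixWord, actW_cons, (hq m).1, (hq m).2, ih]; rfl

namespace IsNucleus

variable {S} {N : Finset G} (hN : S.IsNucleus N)
include hN

theorem one_mem [Nonempty X] : (1 : G) ∈ N := by
  obtain ⟨k, hk⟩ := hN.2.1 1
  simpa using hk (List.replicate k (Classical.arbitrary X)) (by simp)

theorem resW_mem {g : G} (hg : g ∈ N) (v : List X) : S.resW g v ∈ N := by
  induction v generalizing g with
  | nil => exact hg
  | cons x v ih => exact ih (hN.1 g hg x)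

theorem inv_mem {g : G} (hg : g ∈ N) : g⁻¹ ∈ N := by
  classical
  have hsub : N ⊆ N.image (·⁻¹) := hN.2.2 _ fun a => by
    obtain ⟨k, hk⟩ := hN.2.1 a⁻¹
    refine ⟨k, fun v hv => Finset.mem_image.mpr ⟨(S.resW a v)⁻¹, ?_, inv_inv _⟩⟩
    rw [← resW_inv_actW]
    exact hk _ (by rwa [length_actW])
  obtain ⟨b, hb, rfl⟩ := Finset.mem_image.mp (hsub hg)
  rwa [inv_inv]

theorem exists_forall_resW_mem (F : Finset G) :
    ∃ k, ∀ g ∈ F, ∀ v : List X, k ≤ v.length → S.resW g v ∈ N := by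
  choose f hf using hN.2.1
  exact ⟨F.sup f, fun g hg v hv => hf g v ((Finset.le_sup hg).trans hv)⟩

theorem mem_of_path (F : Finset G) {w : ℕ → X} {q : ℕ → G} (hF : ∀ i, q i ∈ F)
    (hq : ∀ i, S.res (q (i + 1)) (w i) = q i) (i : ℕ) : q i ∈ N := by
  obtain ⟨k, hk⟩ := hN.exists_forall_resW_mem F
  have := S.resW_suffixWord (w := fun j => w (i + j)) (q := fun j => q (i + j)) (fun j => hq _) k
  exact this ▸ hk _ (hF _) _ (length_suffixWord _ _).ge

end IsNucleus

section LimEquiv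

variable {S} {N : Finset G} (hN : S.IsNucleus N)
include hN

theorem limEquiv_refl [Nonempty X] (w : ℕ → X) : LimEquiv S N w w :=
  ⟨1, fun _ => 1, rfl, fun _ => hN.one_mem, fun _ => ⟨S.res_one _, S.toFun_one _⟩⟩

theorem LimEquiv.symm {w w' : ℕ → X} : LimEquiv S N w w' → LimEquiv S N w' w := by
  rintro ⟨-, q, rfl, hqN, hq⟩
  refine ⟨(q 0)⁻¹, fun i => (q i)⁻¹, rfl, fun i => hN.inv_mem (hqN i), fun i => ?_⟩
  rw [← (hq i).2, res_inv_toFun, toFun_inv_toFun, (hq i).1]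
  exact ⟨rfl, rfl⟩

theorem LimEquiv.trans {w w' w'' : ℕ → X} :
    LimEquiv S N w w' → LimEquiv S N w' w'' → LimEquiv S N w w'' := by
  classical
  rintro ⟨-, p, rfl, hpN, hp⟩ ⟨-, q, rfl, hqN, hq⟩
  have hres : ∀ i, S.res (q (i + 1) * p (i + 1)) (w i) = q i * p i := fun i => by
    rw [S.res_mul, (hp i).1, (hp i).2, (hq i).1]
  refine ⟨_, fun i => q i * p i, rfl,
    hN.mem_of_path (N * N) (fun i => Finset.mul_mem_mul (hqN i) (hpN i)) hres,
    fun i => ⟨hres i, ?_⟩⟩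
  rw [S.toFun_mul, (hp i).2, (hq i).2]

theorem limEquiv_equivalence [Nonempty X] : Equivalence (LimEquiv S N) :=
  ⟨limEquiv_refl hN, LimEquiv.symm hN, LimEquiv.trans hN⟩

theorem quot_mk_eq_iff [Nonempty X] {w w' : ℕ → X} :
    Quot.mk (LimEquiv S N) w = Quot.mk (LimEquiv S N) w' ↔ LimEquiv S N w w' :=
  ⟨fun h => (limEquiv_equivalence hN).eqvGen_iff.mp (Quot.eqvGen_exact h), Quot.sound⟩

theorem exists_limEquiv_cons_of_limEquiv_tail {u w : ℕ → X}
    (h : LimEquiv S N (fun i => u (i + 1)) w) : ∃ x, LimEquiv S N u (Stream'.cons x w) := by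
  obtain ⟨-, q, rfl, hqN, hq⟩ := h
  refine ⟨S.toFun (q 0) (u 0), _, Stream'.cons (S.res (q 0) (u 0)) q, rfl, ?_, ?_⟩
  · rintro (_ | i)
    exacts [hN.1 _ (hqN 0) _, hqN i]
  · rintro (_ | i)
    exacts [⟨rfl, rfl⟩, hq i]

end LimEquiv

def IsNontrivialFix (g : G) (v : List X) : Prop :=
  S.actW g v = v ∧ S.resW g v ≠ 1

variable {S}

theorem not_isNontrivialFix_one (v : List X) : ¬ S.IsNontrivialFix 1 v := fun h =>
  h.2 (S.resW_one v)

theorem isNontrivialFix_append_iff {g : G} {u v : List X} :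
    S.IsNontrivialFix g (u ++ v) ↔ S.IsNontrivialFix g u ∧ S.IsNontrivialFix (S.resW g u) v := by
  unfold IsNontrivialFix
  rw [actW_append, resW_append]
  constructor
  · rintro ⟨he, hne⟩
    obtain ⟨hu, hv⟩ := List.append_inj he (S.length_actW g u)
    exact ⟨⟨hu, fun h1 => hne (by rw [h1, resW_one])⟩, hv, hne⟩
  · rintro ⟨⟨hu, -⟩, hv, hne⟩
    exact ⟨by rw [hu, hv], hne⟩

theorem IsNontrivialFix.conj {g : G} {v : List X} (h : S.IsNontrivialFix g v) (p : G) :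
    S.IsNontrivialFix (p * g * p⁻¹) (S.actW p v) := by
  refine ⟨?_, ?_⟩
  · rw [actW_mul, actW_mul, actW_inv_actW, h.1]
  · rw [resW_mul, resW_mul, actW_inv_actW, resW_inv_actW, h.1]
    exact fun h1 => h.2 (by simpa using h1)

variable (S) in
/-- By König's lemma this is the complement of the set `U` of the paper (the `w` admitting a
path labeled `(w, w)` in the nucleus that does not end at `1`). Stating it through finite
suffixes makes it visibly measurable and lets saturation be checked word by word. -/
def exceptionalSet (N : Finset G) : Set (ℕ → X) :=
  {w | ∀ m, ∃ g ∈ N, S.IsNontrivialFix g (suffixWord w m)}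

variable {N : Finset G}

theorem mem_exceptionalSet_of_moorePath {w : ℕ → X} {h : G} (hw : S.MoorePath N w w h)
    (h1 : h ≠ 1) : w ∈ S.exceptionalSet N := by
  obtain ⟨q, rfl, hqN, hq⟩ := hw
  exact fun m => ⟨q m, hqN m, S.actW_suffixWord hq m,
    by rw [S.resW_suffixWord (fun i => (hq i).1)]; exact h1⟩

theorem mem_exceptionalSet_of_limEquiv_cons {x y : X} (hxy : x ≠ y) {w : ℕ → X}
    (h : LimEquiv S N (Stream'.cons x w) (Stream'.cons y w)) : w ∈ S.exceptionalSet N := by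
  obtain ⟨-, q, rfl, hqN, hq⟩ := h
  refine mem_exceptionalSet_of_moorePath ⟨fun i => q (i + 1), rfl, fun i => hqN _,
    fun i => hq (i + 1)⟩ fun (h1 : q 1 = 1) => hxy ?_
  have h0 := (hq 0).2
  rwa [h1, S.toFun_one] at h0

theorem exceptionalSet_saturated (hN : S.IsNucleus N) {w w' : ℕ → X} (hw : w ∈ S.exceptionalSet N)
    (h : LimEquiv S N w w') : w' ∈ S.exceptionalSet N := by
  classical
  obtain ⟨-, p, rfl, hpN, hp⟩ := h
  obtain ⟨k, hk⟩ := hN.exists_forall_resW_mem (N * N * N⁻¹)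
  intro m
  obtain ⟨g, hgN, hg⟩ := hw (m + k)
  have hfix := hg.conj (p (m + k))
  rw [S.actW_suffixWord hp, suffixWord_add, isNontrivialFix_append_iff] at hfix
  refine ⟨_, hk _ ?_ _ (length_suffixWord _ _).ge, hfix.2⟩
  exact Finset.mul_mem_mul (Finset.mul_mem_mul (hpN _) hgN) (Finset.inv_mem_inv (hpN _))

theorem measurableSet_exceptionalSet [MeasurableSpace X] [MeasurableSingletonClass X] [Finite X] :
    MeasurableSet (S.exceptionalSet N) := by
  rw [exceptionalSet, Set.ofPred_forall]
  exact .iInter fun m => measurableSet_setOf_suffixWord (fun v => ∃ g ∈ N, S.IsNontrivialFix g v) m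

end SSA

def words (X : Type*) [Fintype X] (m : ℕ) : Finset (List X) :=
  (Finset.univ : Finset (List.Vector X m)).map ⟨List.Vector.toList, List.Vector.toList_injective⟩

section Words

variable {X : Type*} [Fintype X]

theorem mem_words {m : ℕ} {v : List X} : v ∈ words X m ↔ v.length = m := by
  simp only [words, Finset.mem_map, Finset.mem_univ, true_and, Function.Embedding.coeFn_mk]
  exact ⟨fun ⟨u, hu⟩ => hu ▸ u.toList_length, fun h => ⟨⟨v, h⟩, rfl⟩⟩

theorem card_words (m : ℕ) : (words X m).card = Fintype.card X ^ m := by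
  rw [words, Finset.card_map, Finset.card_univ, card_vector]

end Words

namespace SSA

variable {G X : Type*} [Group G] {S : SSA G X}

theorem exists_length_actW_ne [Nonempty X] {N : Finset G}
    (hfaith : ∀ h ∈ N, h ≠ 1 → ∃ v : List X, S.actW h v ≠ v) :
    ∃ L, ∀ g ∈ N, g ≠ 1 → ∃ v : List X, v.length = L ∧ S.actW g v ≠ v := by
  have hev : ∀ g ∈ N, ∀ᶠ L in Filter.atTop,
      g ≠ 1 → ∃ v : List X, v.length = L ∧ S.actW g v ≠ v := by
    intro g hg
    rcases eq_or_ne g 1 with rfl | h1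
    · exact Filter.Eventually.of_forall fun _ h => absurd rfl h
    obtain ⟨u, hu⟩ := hfaith g hg h1
    filter_upwards [Filter.eventually_ge_atTop u.length] with L hL _
    exact ⟨u ++ List.replicate (L - u.length) (Classical.arbitrary X), by simp; omega,
      S.actW_append_ne hu _⟩
  exact ((Filter.eventually_all_finset N).2 hev).exists

variable [Fintype X]

open Classical in
variable (S) in
noncomputable def fixedWords (g : G) (m : ℕ) : Finset (List X) :=
  (words X m).filter (S.IsNontrivialFix g)

theorem mem_fixedWords {g : G} {m : ℕ} {v : List X} :
    v ∈ S.fixedWords g m ↔ v.length = m ∧ S.IsNontrivialFix g v := by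
  classical
  rw [fixedWords, Finset.mem_filter, mem_words]

theorem card_fixedWords_le_of_actW_ne {g : G} {v : List X} (hv : S.actW g v ≠ v) :
    (S.fixedWords g v.length).card ≤ Fintype.card X ^ v.length - 1 := by
  classical
  have hsub : S.fixedWords g v.length ⊆ (words X v.length).erase v := fun u hu => by
    obtain ⟨hlen, hfix⟩ := mem_fixedWords.1 hu
    exact Finset.mem_erase.2 ⟨fun h => hv (h ▸ hfix.1), mem_words.2 hlen⟩
  calc (S.fixedWords g v.length).card ≤ ((words X v.length).erase v).card :=
        Finset.card_le_card hsub
    _ = Fintype.card X ^ v.length - 1 := by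
        rw [Finset.card_erase_of_mem (mem_words.2 rfl), card_words]

theorem card_fixedWords_add_le (g : G) (l m : ℕ) :
    (S.fixedWords g (l + m)).card ≤
      ∑ u ∈ S.fixedWords g l, (S.fixedWords (S.resW g u) m).card := by
  classical
  have hsub : S.fixedWords g (l + m) ⊆
      (S.fixedWords g l).biUnion fun u => (S.fixedWords (S.resW g u) m).image (u ++ ·) := by
    intro v hv
    obtain ⟨hlen, hfix⟩ := mem_fixedWords.1 hv
    rw [← List.take_append_drop l v, isNontrivialFix_append_iff] at hfix
    refine Finset.mem_biUnion.2 ⟨v.take l, mem_fixedWords.2 ⟨by simp [hlen], hfix.1⟩,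
      Finset.mem_image.2 ⟨v.drop l, mem_fixedWords.2 ⟨by simp [hlen], hfix.2⟩,
        List.take_append_drop l v⟩⟩
  calc (S.fixedWords g (l + m)).card ≤ _ := Finset.card_le_card hsub
    _ ≤ _ := Finset.card_biUnion_le
    _ ≤ _ := Finset.sum_le_sum fun u _ => Finset.card_image_le

theorem card_fixedWords_mul_le {N : Finset G} (hN : S.IsNucleus N) {L : ℕ}
    (hL : ∀ g ∈ N, g ≠ 1 → ∃ v : List X, v.length = L ∧ S.actW g v ≠ v) (k : ℕ) {g : G}
    (hg : g ∈ N) : (S.fixedWords g (k * L)).card ≤ (Fintype.card X ^ L - 1) ^ k := by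
  induction k generalizing g with
  | zero =>
    rw [Nat.zero_mul, pow_zero, Finset.card_le_one]
    intro a ha b hb
    rw [List.length_eq_zero_iff.1 (mem_fixedWords.1 ha).1,
      List.length_eq_zero_iff.1 (mem_fixedWords.1 hb).1]
  | succ k ih =>
    have hblock : (S.fixedWords g L).card ≤ Fintype.card X ^ L - 1 := by
      rcases eq_or_ne g 1 with rfl | h1
      · have hempty : S.fixedWords 1 L = ∅ := Finset.eq_empty_of_forall_notMem fun v hv =>
          not_isNontrivialFix_one v (mem_fixedWords.1 hv).2
        simp [hempty]
      · obtain ⟨v, rfl, hv⟩ := hL g hg h1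
        exact card_fixedWords_le_of_actW_ne hv
    calc (S.fixedWords g ((k + 1) * L)).card
        ≤ ∑ u ∈ S.fixedWords g L, (S.fixedWords (S.resW g u) (k * L)).card := by
          rw [Nat.succ_mul, Nat.add_comm]; exact card_fixedWords_add_le g L (k * L)
      _ ≤ ∑ u ∈ S.fixedWords g L, (Fintype.card X ^ L - 1) ^ k :=
          Finset.sum_le_sum fun u _ => ih (hN.resW_mem hg u)
      _ ≤ (Fintype.card X ^ L - 1) ^ (k + 1) := by
          rw [Finset.sum_const, smul_eq_mul, pow_succ']
          exact Nat.mul_le_mul_right _ hblock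

end SSA

theorem measure_setOf_suffixWord_mem_le {X : Type*} [MeasurableSpace X] {μ : Measure (ℕ → X)}
    {c : ℝ≥0∞} (hμ : ∀ u : List X, μ (Cyl u) = c ^ u.length) {m : ℕ} (A : Finset (List X))
    (hA : ∀ v ∈ A, v.length = m) : μ {w | suffixWord w m ∈ A} ≤ A.card * c ^ m := by
  calc μ {w | suffixWord w m ∈ A} ≤ μ (⋃ v ∈ A, Cyl v.reverse) := by
        refine measure_mono fun w hw => Set.mem_iUnion₂.2 ⟨_, hw, ?_⟩
        rw [← setOf_suffixWord_eq, hA _ hw]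
        rfl
    _ ≤ ∑ v ∈ A, μ (Cyl v.reverse) := measure_biUnion_finset_le _ _
    _ = A.card * c ^ m := by
        rw [Finset.sum_congr rfl fun v hv => by rw [hμ, List.length_reverse, hA v hv],
          Finset.sum_const, nsmul_eq_mul]

theorem natCast_sub_one_mul_inv_lt_one {M : ℕ} (hM : M ≠ 0) :
    ((M - 1 : ℕ) : ℝ≥0∞) * (M : ℝ≥0∞)⁻¹ < 1 := by
  rw [← div_eq_mul_inv, ENNReal.div_lt_iff (Or.inl (by exact_mod_cast hM))
    (Or.inl (ENNReal.natCast_ne_top M)), one_mul]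
  exact_mod_cast Nat.sub_lt (Nat.pos_of_ne_zero hM) one_pos

namespace SSA

variable {G X : Type*} [Group G] [Fintype X] [MeasurableSpace X] {S : SSA G X}

theorem measure_exceptionalSet_le {N : Finset G} (hN : S.IsNucleus N) {L : ℕ}
    (hL : ∀ g ∈ N, g ≠ 1 → ∃ v : List X, v.length = L ∧ S.actW g v ≠ v) {μ : Measure (ℕ → X)}
    (hμ : ∀ u : List X, μ (Cyl u) = (Fintype.card X : ℝ≥0∞)⁻¹ ^ u.length) (k : ℕ) :
    μ (S.exceptionalSet N) ≤ N.card *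
      (((Fintype.card X ^ L - 1 : ℕ) : ℝ≥0∞) * ((Fintype.card X ^ L : ℕ) : ℝ≥0∞)⁻¹) ^ k := calc
  μ (S.exceptionalSet N) ≤ μ (⋃ g ∈ N, {w | suffixWord w (k * L) ∈ S.fixedWords g (k * L)}) :=
      measure_mono fun w hw => by
        obtain ⟨g, hg, hfix⟩ := hw (k * L)
        exact Set.mem_iUnion₂.2 ⟨g, hg, mem_fixedWords.2 ⟨length_suffixWord _ _, hfix⟩⟩
  _ ≤ ∑ g ∈ N, μ {w | suffixWord w (k * L) ∈ S.fixedWords g (k * L)} :=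
      measure_biUnion_finset_le _ _
  _ ≤ ∑ g ∈ N, (((Fintype.card X ^ L - 1) ^ k : ℕ) : ℝ≥0∞) *
        (Fintype.card X : ℝ≥0∞)⁻¹ ^ (k * L) :=
      Finset.sum_le_sum fun g hg =>
        (measure_setOf_suffixWord_mem_le hμ _ fun v hv => (mem_fixedWords.1 hv).1).trans
          (mul_le_mul_left (by exact_mod_cast card_fixedWords_mul_le hN hL k hg) _)
  _ = _ := by
      rw [Finset.sum_const, nsmul_eq_mul, pow_mul', ← ENNReal.inv_pow, mul_pow]
      push_cast
      rfl

theorem measure_exceptionalSet_eq_zero [Nonempty X] {N : Finset G} (hN : S.IsNucleus N)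
    (hfaith : ∀ h ∈ N, h ≠ 1 → ∃ v : List X, S.actW h v ≠ v) {μ : Measure (ℕ → X)}
    (hμ : ∀ u : List X, μ (Cyl u) = (Fintype.card X : ℝ≥0∞)⁻¹ ^ u.length) :
    μ (S.exceptionalSet N) = 0 := by
  obtain ⟨L, hL⟩ := exists_length_actW_ne hfaith
  have hr := natCast_sub_one_mul_inv_lt_one (pow_ne_zero L (Fintype.card_ne_zero (α := X)))
  have hlim := ENNReal.Tendsto.const_mul (ENNReal.tendsto_pow_atTop_nhds_zero_of_lt_one hr)
    (Or.inr (ENNReal.natCast_ne_top N.card))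
  rw [mul_zero] at hlim
  exact le_antisymm (ge_of_tendsto' hlim (measure_exceptionalSet_le hN hL hμ)) zero_le

end SSA

theorem mem_cyl_singleton {X : Type*} {w : ℕ → X} {x : X} : w ∈ Cyl [x] ↔ w 0 = x :=
  ⟨fun h => h 0 (by simp), fun h i hi => by
    obtain rfl : i = 0 := by simpa using hi
    exact h⟩

theorem preimage_map_swap_eq {ι X : Type*} [MeasurableSpace X] [DecidableEq X] {x y : X}
    (hxy : ∀ s, MeasurableSet s → x ∈ s → y ∈ s) {T : Set (ι → X)} (hT : MeasurableSet T) :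
    (fun w i => Equiv.swap x y (w i)) ⁻¹' T = T := by
  have hswap : ∀ s, MeasurableSet s → Equiv.swap x y ⁻¹' s = s := fun s hs => by
    have hyx : y ∈ s → x ∈ s := fun hy => by_contra fun hx => hxy sᶜ hs.compl hx hy
    ext z
    rcases eq_or_ne z x with rfl | hzx
    · simpa using ⟨hyx, hxy s hs⟩
    rcases eq_or_ne z y with rfl | hzy
    · simpa using ⟨hxy s hs, hyx⟩
    simp [Equiv.swap_apply_of_ne_of_ne hzx hzy]
  have hinv : MeasurableSpace.pi ≤
      MeasurableSpace.invariants fun (w : ι → X) i => Equiv.swap x y (w i) :=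
    iSup_le fun i => Measurable.comap_le <| MeasurableSpace.measurable_invariants_dom.2
      ⟨measurable_pi_apply i, fun s hs => congrArg (fun t => (fun w : ι → X => w i) ⁻¹' t)
        (hswap s hs)⟩
  exact (hinv T hT).2

theorem separatesPoints_of_measure_cyl {X : Type*} [Fintype X] [MeasurableSpace X]
    {μ : Measure (ℕ → X)} (hμ : ∀ u : List X, μ (Cyl u) = (Fintype.card X : ℝ≥0∞)⁻¹ ^ u.length) :
    MeasurableSpace.SeparatesPoints X := by
  classical
  refine ⟨fun x y hxy => by_contra fun hne => ?_⟩
  let T : X → Set (ℕ → X) := fun z => toMeasurable μ (Cyl [z])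
  have hcyl : ∀ z, Cyl [z] ⊆ T z := fun z => subset_toMeasurable _ _
  -- A measurable hull of `Cyl [x]` cannot tell `x` from `y`, so it also contains `Cyl [y]`.
  have hyx : Cyl [y] ⊆ T x := fun w hw => by
    change w ∈ toMeasurable μ (Cyl [x])
    rw [← preimage_map_swap_eq hxy (measurableSet_toMeasurable μ (Cyl [x]))]
    exact hcyl x (mem_cyl_singleton.2 (by simp [mem_cyl_singleton.1 hw]))
  have hcover : Set.univ ⊆ ⋃ z ∈ Finset.univ.erase y, T z := fun w _ => by
    by_cases h : w 0 = y
    · exact Set.mem_iUnion₂.2 ⟨x, Finset.mem_erase.2 ⟨hne, Finset.mem_univ x⟩,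
        hyx (mem_cyl_singleton.2 h)⟩
    · exact Set.mem_iUnion₂.2 ⟨w 0, Finset.mem_erase.2 ⟨h, Finset.mem_univ _⟩,
        hcyl _ (mem_cyl_singleton.2 rfl)⟩
  have hle : (1 : ℝ≥0∞) ≤ ((Fintype.card X - 1 : ℕ) : ℝ≥0∞) * (Fintype.card X : ℝ≥0∞)⁻¹ := calc
    1 = μ (Cyl []) := by rw [hμ, List.length_nil, pow_zero]
    _ ≤ μ (⋃ z ∈ Finset.univ.erase y, T z) := measure_mono ((Set.subset_univ _).trans hcover)
    _ ≤ ∑ z ∈ Finset.univ.erase y, μ (T z) := measure_biUnion_finset_le _ _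
    _ = _ := by
      simp [T, measure_toMeasurable, hμ, Finset.card_erase_of_mem]
  exact (natCast_sub_one_mul_inv_lt_one (Fintype.card_pos_iff.2 ⟨x⟩).ne').not_ge hle

namespace SSA

variable {G X : Type*} [Group G] [Nonempty X] {S : SSA G X} {N : Finset G}

theorem encard_fiber_eq_card [Fintype X] (hN : S.IsNucleus N)
    {s : Quot (LimEquiv S N) → Quot (LimEquiv S N)}
    (hs : ∀ w : ℕ → X,
      s (Quot.mk (LimEquiv S N) w) = Quot.mk (LimEquiv S N) (fun i => w (i + 1)))
    {w : ℕ → X} (hw : w ∉ S.exceptionalSet N) :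
    {y | s y = Quot.mk (LimEquiv S N) w}.encard = Fintype.card X := by
  have hrange : {y | s y = Quot.mk (LimEquiv S N) w} =
      Set.range fun x => Quot.mk (LimEquiv S N) (Stream'.cons x w) := by
    ext y
    constructor
    · intro hy
      obtain ⟨u, rfl⟩ := Quot.exists_rep y
      obtain ⟨x, hx⟩ := exists_limEquiv_cons_of_limEquiv_tail hN
        ((quot_mk_eq_iff hN).1 ((hs u).symm.trans hy))
      exact ⟨x, (Quot.sound hx).symm⟩
    · rintro ⟨x, rfl⟩
      exact hs (Stream'.cons x w)
  have hinj : Function.Injective fun x => Quot.mk (LimEquiv S N) (Stream'.cons x w) :=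
    fun x y hxy => by_contra fun hne =>
      hw (mem_exceptionalSet_of_limEquiv_cons hne ((quot_mk_eq_iff hN).1 hxy))
  rw [hrange, ← Set.image_univ, hinj.encard_image, Set.encard_univ, ENat.card_eq_coe_fintype_card]

theorem preimage_image_quot_mk_exceptionalSet (hN : S.IsNucleus N) :
    Quot.mk (LimEquiv S N) ⁻¹' (Quot.mk (LimEquiv S N) '' S.exceptionalSet N) =
      S.exceptionalSet N := by
  refine (Set.subset_preimage_image _ _).antisymm' ?_
  rintro w' ⟨w, hw, hww'⟩
  exact exceptionalSet_saturated hN hw ((quot_mk_eq_iff hN).1 hww')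

end SSA

/-- For a contracting faithful self-similar action with limit space `J = X^{-ω}/~`, the induced
shift map `s` and the self-similar measure `m` (push-forward of the uniform Bernoulli measure):
`m`-almost every point of `J` has exactly `|X|` preimages under `s`. -/
theorem stmt_17 {G X : Type*} [Group G] [Fintype X] [Nonempty X] [MeasurableSpace X]
    (S : SSA G X) (N : Finset G) (hN : S.IsNucleus N)
    (hfaith : ∀ h ∈ N, h ≠ 1 → ∃ v : List X, S.actW h v ≠ v)
    (μ0 : Measure (ℕ → X))
    (hμ0 : ∀ u : List X, μ0 (Cyl u) = ((Fintype.card X : ℝ≥0∞))⁻¹ ^ u.length)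
    (s : Quot (LimEquiv S N) → Quot (LimEquiv S N))
    (hs : ∀ w : ℕ → X,
      s (Quot.mk (LimEquiv S N) w) = Quot.mk (LimEquiv S N) (fun i => w (i + 1))) :
    ∀ᵐ x ∂(Measure.map (Quot.mk (LimEquiv S N)) μ0),
      {y : Quot (LimEquiv S N) | s y = x}.encard = (Fintype.card X : ℕ∞) := by
  have := separatesPoints_of_measure_cyl hμ0
  have hsat := SSA.preimage_image_quot_mk_exceptionalSet hN
  have hmeas : MeasurableSet (Quot.mk (LimEquiv S N) '' S.exceptionalSet N) := by
    change MeasurableSet (Quot.mk (LimEquiv S N) ⁻¹' _)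
    rw [hsat]
    exact SSA.measurableSet_exceptionalSet
  refine ae_iff.2 (measure_mono_null (t := Quot.mk (LimEquiv S N) '' S.exceptionalSet N)
    (fun ξ hξ => ?_) ?_)
  · obtain ⟨w, rfl⟩ := Quot.exists_rep ξ
    by_contra hw
    exact hξ (SSA.encard_fiber_eq_card hN hs fun hw' => hw ⟨w, hw', rfl⟩)
  · rw [Measure.map_apply measurable_quot_mk hmeas, hsat]
    exact SSA.measure_exceptionalSet_eq_zero hN hfaith hμ0
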